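/- Let φ : K_S → K_S be the continuous map sending S(ω₁) injectively into L(ω₁) and everything else to ∞, and let g : K_S → ℝ be a bounded Borel function such that C_φ + M_g : C(K_S) → B(K_S) has separable range (where B(K_S) is the bounded Borel functions with sup norm). Then {x ∈ K_S : g(x) ≠ 0} is countable. -/

import Mathlib

open Topology OnePoint

noncomputable def omega1 : Ordinal := (Cardinal.aleph 1).ord

def IsClubIn (C : Set Ordinal) : Prop :=
  C ⊆ Set.Iio omega1 ∧
  (∀ o, o < omega1 → o ≠ 0 → (∀ p < o, ∃ q ∈ C, p < q ∧ q < o) → o ∈ C) ∧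
  (∀ o, o < omega1 → ∃ p ∈ C, o < p)

/-- The ordinals below `ω₁`. -/
abbrev Om : Type _ := {o : Ordinal // o < omega1}

/-- A ladder system on `ω₁`: for each countable limit ordinal `α`, a strictly increasing
sequence of non-limit ordinals converging to `α`. -/
structure LadderSystem where
  s : Om → ℕ → Om
  strictMono : ∀ α : Om, Order.IsSuccLimit (α : Ordinal) → StrictMono fun n => (s α n : Ordinal)
  notLimit : ∀ α : Om, Order.IsSuccLimit (α : Ordinal) → ∀ n, ¬ Order.IsSuccLimit (s α n : Ordinal)
  lt_self : ∀ α : Om, Order.IsSuccLimit (α : Ordinal) → ∀ n, (s α n : Ordinal) < (α : Ordinal)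
  conv : ∀ α : Om, Order.IsSuccLimit (α : Ordinal) → ∀ β < (α : Ordinal), ∃ n, β < (s α n : Ordinal)

/-- The ladder system topology on `ω₁`: non-limit ordinals are isolated, and a set is a
neighborhood of a limit ordinal `α` iff it contains `α` and cofinitely many points of the
ladder `s_α`. -/
def ladderTop (S : LadderSystem) : TopologicalSpace Om where
  IsOpen U := ∀ α ∈ U, Order.IsSuccLimit (α : Ordinal) → {n | S.s α n ∉ U}.Finite
  isOpen_univ := by intro α _ _; simp
  isOpen_inter := by
    intro U V hU hV α hα hlim
    refine ((hU α hα.1 hlim).union (hV α hα.2 hlim)).subset ?_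
    intro n hn
    simp only [Set.mem_setOf_eq, Set.mem_inter_iff, Set.mem_union] at hn ⊢
    tauto
  isOpen_sUnion := by
    intro T hT α hα hlim
    obtain ⟨t, ht, hαt⟩ := hα
    exact (hT t ht α hαt hlim).subset fun n hn h => hn ⟨t, ht, h⟩

/-- The topology of the one-point compactification `K_S` of the ladder system space. -/
def ksTop (S : LadderSystem) : TopologicalSpace (OnePoint Om) :=
  @OnePoint.instTopologicalSpace Om (ladderTop S)

/-! If `g` were nonzero at uncountably many points of `K_S`, then for some `ε > 0` there
would be uncountably many points `x`, all non-limit or all limit ordinals, with `|g x| ≥ ε`.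
Attach to each such `x` a compact clopen set `W_x ∋ x`: `{x}` if `x` is not a limit, the ladder
`s_x ∪ {x}` if it is (ladders of distinct limits meet in finitely many points, and they contain
no other limit). Within each class `φ x ∉ W_y` and `x ∉ W_y` for `y ≠ x`, so the functions
`(C_φ + M_g) χ_{W_x}` and `(C_φ + M_g) χ_{W_y}` differ by `|g x| ≥ ε` at `x`: an uncountable
`ε`-separated family in a separable range. -/

open Set Filter

/-- The operator `C_φ + M_g`. -/
def weightedComp {X : Type*} (φ : X → X) (g : X → ℝ) (f : X → ℝ) : X → ℝ :=
  fun x => f (φ x) + f x * g x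

theorem countable_of_pairwise_separated_of_approx {ι Y : Type*} {T : ι → Y → ℝ}
    {D : Set (Y → ℝ)} (hD : D.Countable) {s : Set ι} {ε : ℝ}
    (happrox : ∀ i ∈ s, ∃ d ∈ D, ∀ y, |T i y - d y| ≤ ε / 3)
    (hsep : s.Pairwise fun i j => ∃ y, ε ≤ |T i y - T j y|) (hε : 0 < ε) :
    s.Countable := by
  have hcover : s ⊆ ⋃ d ∈ D, {i ∈ s | ∀ y, |T i y - d y| ≤ ε / 3} := by
    intro i hi
    obtain ⟨d, hd, hid⟩ := happrox i hi
    exact mem_biUnion hd ⟨hi, hid⟩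
  refine (hD.biUnion fun d _ => Subsingleton.countable ?_).mono hcover
  intro i ⟨hi, hid⟩ j ⟨hj, hjd⟩
  by_contra hij
  obtain ⟨y, hy⟩ := hsep hi hj hij
  have := abs_sub_le (T i y) (d y) (T j y)
  rw [abs_sub_comm (d y)] at this
  linarith [hid y, hjd y]

theorem countable_setOf_ne_zero_of_indicator_approx {ι X : Type*} {φ : X → X} {g : X → ℝ}
    {D : Set (X → ℝ)} (hD : D.Countable) {s : Set ι} {W : ι → Set X} {p : ι → X}
    (happrox : ∀ i ∈ s, ∀ ε > 0, ∃ d ∈ D,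
      ∀ x, |weightedComp φ g ((W i).indicator 1) x - d x| ≤ ε)
    (hmem : ∀ i ∈ s, p i ∈ W i) (hnotMem : s.Pairwise fun i j => p i ∉ W j)
    (hφ : ∀ i ∈ s, ∀ j ∈ s, φ (p i) ∉ W j) :
    {i ∈ s | g (p i) ≠ 0}.Countable := by
  have hcover :
      {i ∈ s | g (p i) ≠ 0} ⊆ ⋃ n : ℕ, {i ∈ s | 1 / ((n : ℝ) + 1) ≤ |g (p i)|} := by
    intro i ⟨hi, hgi⟩
    obtain ⟨n, hn⟩ := exists_nat_one_div_lt (abs_pos.mpr hgi)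
    exact mem_iUnion.mpr ⟨n, hi, hn.le⟩
  refine (countable_iUnion fun n => ?_).mono hcover
  have hpos : (0 : ℝ) < 1 / ((n : ℝ) + 1) := by positivity
  refine countable_of_pairwise_separated_of_approx hD
    (T := fun i => weightedComp φ g ((W i).indicator 1))
    (fun i hi => happrox i hi.1 _ (div_pos hpos three_pos)) ?_ hpos
  intro i hi j hj hij
  refine ⟨p i, ?_⟩
  simpa [weightedComp, hφ i hi.1 i hi.1, hφ i hi.1 j hj.1, hmem i hi.1,
    hnotMem hi.1 hj.1 hij] using hi.2

theorem OnePoint.isClopen_image_coe {X : Type*} [TopologicalSpace X] {s : Set X}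
    (hs : IsClopen s) (hc : IsCompact s) : IsClopen ((↑) '' s : Set (OnePoint X)) :=
  ⟨OnePoint.isClosed_image_coe.mpr ⟨hs.1, hc⟩, OnePoint.isOpen_image_coe.mpr hs.2⟩

namespace LadderSystem

variable (S : LadderSystem) {α β : Om}

def ladder (α : Om) : Set Om := insert α (range (S.s α))

theorem s_injective (hα : Order.IsSuccLimit (α : Ordinal)) : Function.Injective (S.s α) :=
  fun _ _ h => (S.strictMono α hα).injective (congrArg Subtype.val h)

theorem finite_setOf_s_le (hα : Order.IsSuccLimit (α : Ordinal)) {γ : Ordinal} (hγ : γ < α) :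
    {n | (S.s α n : Ordinal) ≤ γ}.Finite := by
  obtain ⟨n₀, hn₀⟩ := S.conv α hα γ hγ
  refine (finite_Iio n₀).subset fun n hn => ?_
  by_contra h
  exact (((S.strictMono α hα).monotone (not_lt.mp h)).trans hn).not_gt hn₀

theorem finite_range_inter_range (hα : Order.IsSuccLimit (α : Ordinal))
    (hβ : Order.IsSuccLimit (β : Ordinal)) (hne : α ≠ β) :
    (range (S.s α) ∩ range (S.s β)).Finite := by
  wlog hlt : (α : Ordinal) < β generalizing α β
  · rw [inter_comm]
    exact this hβ hα hne.symm <| (le_of_not_gt hlt).lt_of_ne fun h => hne (Subtype.ext h).symm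
  refine ((S.finite_setOf_s_le hβ hlt).image (S.s β)).subset ?_
  rintro _ ⟨⟨m, rfl⟩, ⟨n, hn⟩⟩
  exact ⟨n, by rw [mem_ofPred_eq, hn]; exact (S.lt_self α hα m).le, hn⟩

theorem isOpen_singleton (hα : ¬ Order.IsSuccLimit (α : Ordinal)) :
    IsOpen[ladderTop S] {α} := by
  rintro β rfl hβ
  exact absurd hβ hα

theorem isClosed_singleton (α : Om) : IsClosed[ladderTop S] {α} := by
  let _ := ladderTop S
  refine isOpen_compl_iff.mp fun β _ hβ => ?_
  refine Subsingleton.finite fun m hm n hn => S.s_injective hβ ?_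
  simp only [mem_ofPred_eq, mem_compl_iff, mem_singleton_iff, not_not] at hm hn
  rw [hm, hn]

theorem isOpen_ladder (hα : Order.IsSuccLimit (α : Ordinal)) :
    IsOpen[ladderTop S] (S.ladder α) := by
  rintro β (rfl | ⟨n, rfl⟩) hβ
  · simp [ladder]
  · exact absurd hβ (S.notLimit α hα n)

theorem isClosed_ladder (hα : Order.IsSuccLimit (α : Ordinal)) :
    IsClosed[ladderTop S] (S.ladder α) := by
  let _ := ladderTop S
  refine isOpen_compl_iff.mp fun β hβα hβ => ?_
  have hne : α ≠ β := fun h => hβα (h ▸ mem_insert α _)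
  refine ((S.finite_range_inter_range hα hβ hne).preimage (S.s_injective hβ).injOn).subset ?_
  rintro n hn
  simp only [mem_ofPred_eq, mem_compl_iff, not_not] at hn
  rcases hn with h | h
  · exact absurd (h ▸ hα) (S.notLimit β hβ n)
  · exact ⟨h, n, rfl⟩

theorem isCompact_ladder (hα : Order.IsSuccLimit (α : Ordinal)) :
    @IsCompact Om (ladderTop S) (S.ladder α) := by
  let _ := ladderTop S
  refine Tendsto.isCompact_insert_range_of_cofinite (tendsto_nhds.mpr fun U hU hαU => ?_)
  exact eventually_cofinite.mpr (hU α hαU hα)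

theorem isClopen_singleton_coe (hα : ¬ Order.IsSuccLimit (α : Ordinal)) :
    @IsClopen (OnePoint Om) (ksTop S) {(α : OnePoint Om)} := by
  let _ := ladderTop S
  rw [← image_singleton]
  exact OnePoint.isClopen_image_coe ⟨S.isClosed_singleton α, S.isOpen_singleton hα⟩
    isCompact_singleton

theorem isClopen_image_coe_ladder (hα : Order.IsSuccLimit (α : Ordinal)) :
    @IsClopen (OnePoint Om) (ksTop S) ((↑) '' S.ladder α : Set (OnePoint Om)) := by
  let _ := ladderTop S
  exact OnePoint.isClopen_image_coe ⟨S.isClosed_ladder hα, S.isOpen_ladder hα⟩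
    (S.isCompact_ladder hα)

end LadderSystem

theorem stmt18_general (S : LadderSystem) (φ : OnePoint Om → OnePoint Om)
    (h1 : ∀ x : Om, ¬ Order.IsSuccLimit (x : Ordinal) → ∃ y : Om, Order.IsSuccLimit (y : Ordinal) ∧ φ ↑x = ↑y)
    (h3 : ∀ x : Om, Order.IsSuccLimit (x : Ordinal) → φ ↑x = ∞)
    (g : OnePoint Om → ℝ)
    (hsep : ∃ D : Set (OnePoint Om → ℝ), D.Countable ∧
      ∀ f : OnePoint Om → ℝ, Continuous[ksTop S, inferInstance] f → (∃ M, ∀ x, |f x| ≤ M) →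
        ∀ ε : ℝ, 0 < ε → ∃ d ∈ D, ∀ x, |(f (φ x) + f x * g x) - d x| ≤ ε) :
    {x : OnePoint Om | g x ≠ 0}.Countable := by
  obtain ⟨D, hD, happrox⟩ := hsep
  let _ := ksTop S
  have happrox_clopen : ∀ W, IsClopen W → ∀ ε > 0, ∃ d ∈ D,
      ∀ x, |weightedComp φ g (W.indicator 1) x - d x| ≤ ε := fun W hW =>
    happrox _ (LocallyConstant.charFn ℝ hW).continuous
      ⟨1, fun x => by
        simpa using norm_indicator_le_norm_self (s := W) (1 : OnePoint Om → ℝ) x⟩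
  have hsucc : {α ∈ {α : Om | ¬ Order.IsSuccLimit (α : Ordinal)} | g α ≠ 0}.Countable := by
    refine countable_setOf_ne_zero_of_indicator_approx hD (p := (↑))
      (W := fun α : Om => {(α : OnePoint Om)})
      (fun α hα => happrox_clopen _ (S.isClopen_singleton_coe hα)) (fun _ _ => rfl)
      (fun α _ β _ hne h => hne (OnePoint.coe_injective h)) fun α hα β hβ h => ?_
    obtain ⟨y, hy, hφy⟩ := h1 α hα
    rw [hφy, mem_singleton_iff, OnePoint.coe_eq_coe] at h
    exact hβ (h ▸ hy)
  have hlim : {α ∈ {α : Om | Order.IsSuccLimit (α : Ordinal)} | g α ≠ 0}.Countable := by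
    refine countable_setOf_ne_zero_of_indicator_approx hD (p := (↑))
      (W := fun α => (↑) '' S.ladder α)
      (fun α hα => happrox_clopen _ (S.isClopen_image_coe_ladder hα))
      (fun α _ => mem_image_of_mem _ (mem_insert α _)) (fun α hα β hβ hne h => ?_)
      fun α hα β _ => by simp [h3 α hα]
    obtain ⟨γ, hγ | ⟨n, rfl⟩, hγα⟩ := h
    · exact hne ((OnePoint.coe_injective hγα).symm.trans hγ)
    · exact S.notLimit β hβ n (OnePoint.coe_injective hγα ▸ hα)
  refine ((hsucc.image (↑)).union (hlim.image (↑))).insert ∞ |>.mono ?_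
  rintro (_ | α) hα
  · exact mem_insert _ _
  · by_cases hl : Order.IsSuccLimit (α : Ordinal)
    · exact mem_insert_of_mem _ (Or.inr ⟨α, ⟨hl, hα⟩, rfl⟩)
    · exact mem_insert_of_mem _ (Or.inl ⟨α, ⟨hl, hα⟩, rfl⟩)

/-- Let `φ : K_S → K_S` send the non-limit ordinals injectively into the limit ordinals
and everything else to `∞`, and let `g` be a bounded Borel function on `K_S`. If the
operator `C_φ + M_g : C(K_S) → B(K_S)`, `f ↦ f ∘ φ + f·g`, has separable range (for the
sup norm), then `g` vanishes outside a countable set. -/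
theorem stmt18 (S : LadderSystem) (φ : OnePoint Om → OnePoint Om)
    (h1 : ∀ x : Om, ¬ Order.IsSuccLimit (x : Ordinal) → ∃ y : Om, Order.IsSuccLimit (y : Ordinal) ∧ φ ↑x = ↑y)
    (h2 : ∀ x y : Om, ¬ Order.IsSuccLimit (x : Ordinal) → ¬ Order.IsSuccLimit (y : Ordinal) →
      φ ↑x = φ ↑y → x = y)
    (h3 : ∀ x : Om, Order.IsSuccLimit (x : Ordinal) → φ ↑x = ∞)
    (h4 : φ ∞ = ∞)
    (g : OnePoint Om → ℝ)
    (hg : @Measurable (OnePoint Om) ℝ (@borel _ (ksTop S)) (borel ℝ) g)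
    (hgb : ∃ M, ∀ x, |g x| ≤ M)
    (hsep : ∃ D : Set (OnePoint Om → ℝ), D.Countable ∧
      ∀ f : OnePoint Om → ℝ, Continuous[ksTop S, inferInstance] f → (∃ M, ∀ x, |f x| ≤ M) →
        ∀ ε : ℝ, 0 < ε → ∃ d ∈ D, ∀ x, |(f (φ x) + f x * g x) - d x| ≤ ε) :
    {x : OnePoint Om | g x ≠ 0}.Countable :=
  stmt18_general S φ h1 h3 g hsep
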